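/- Let R be a commutative ring and let K = D^perf(R) be the homotopy category of bounded complexes of finitely generated projective R-modules. Let λ : R → End(K) be the ring homomorphism sending r ∈ R to the family of multiplication-by-r endomorphisms on every complex, and let σ : End(K) → R be the map sending α to α_𝟙, viewed as an element of R via the identification End_K(𝟙) ≅ R, where 𝟙 is the complex R concentrated in degree zero. Then σ is a ring homomorphism with σ ∘ λ = id_R, and every α ∈ End(K) with σ(α) = 0 is pointwise nilpotent. -/

import Mathlib

/-!
`σ` is multiplicative because `End(𝟙) ≅ R` is commutative, and `σ ∘ λ = id` is the normalisation
of `ε`. For nilpotence, suppose `α_𝟙 = 0`. Naturality along the maps `R → M, r ↦ r • m` kills `α`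
on every single complex `M[0]`, and compatibility with translation extends this to every `M[a]`.
If `X` is concentrated in degrees `[a, b]`, represent `α_X ^ k` by a chain map `w` vanishing below
`c = a + k`. Since `α` kills `X^c[-c]`, the composite of a representative `u` of `α_X` with the
projection `X → X^c[-c]` induced by `w` is null-homotopic; subtracting the corresponding
null-homotopic map from `u ≫ w` gives a representative of `α_X ^ (k + 1)` vanishing below `c + 1`.
After `b - a + 1` steps the representative is zero.
-/

namespace Balmer

open CategoryTheory CategoryTheory.Limits

universe u

variable (R : Type u) [CommRing R]

/-- The homotopy category of cochain complexes of `R`-modules. -/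
abbrev HtpyCat := HomotopyCategory (ModuleCat.{u} R) (ComplexShape.up ℤ)

/-- The objects of `D^perf(R) = K^b(P(R))`: those complexes of `R`-modules which are
bounded and degreewise finitely generated projective. -/
def IsPerf (X : HtpyCat R) : Prop :=
  (∃ a b : ℤ, ∀ i : ℤ, (i < a ∨ b < i) → IsZero (X.as.X i)) ∧
  (∀ i : ℤ, Module.Finite R (X.as.X i) ∧ Module.Projective R (X.as.X i))

/-- `D^perf(R)`, the homotopy category of bounded complexes of finitely generated
projective `R`-modules, as a full subcategory of the homotopy category. -/
abbrev Dperf := ObjectProperty.FullSubcategory (IsPerf R)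

/-- The complex `𝟙 = (⋯ → 0 → R → 0 → ⋯)` concentrated in degree zero, as an object
of the homotopy category. -/
noncomputable def oneCplx : HtpyCat R :=
  (HomotopyCategory.quotient (ModuleCat.{u} R) (ComplexShape.up ℤ)).obj
    ((HomologicalComplex.single (ModuleCat.{u} R) (ComplexShape.up ℤ) 0).obj
      (ModuleCat.of R R))

variable {R}

/-- The `n`-fold composition of an endomorphism with itself. -/
def endPow {X : HtpyCat R} (f : X ⟶ X) : ℕ → (X ⟶ X)
  | 0 => 𝟙 X
  | (n + 1) => endPow f n ≫ f

/-- An endomorphism of the identity functor of `D^perf(R)` which commutes with the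
translation (the shift of complexes, inherited from the homotopy category). -/
structure REnd (R : Type u) [CommRing R] where
  app : ∀ X : Dperf R, X.obj ⟶ X.obj
  natural : ∀ {X Y : Dperf R} (f : X.obj ⟶ Y.obj), f ≫ app Y = app X ≫ f
  shift : ∀ (X Y : Dperf R) (e : Y.obj ≅ (shiftFunctor (HtpyCat R) (1 : ℤ)).obj X.obj),
    app Y = e.hom ≫ (shiftFunctor (HtpyCat R) (1 : ℤ)).map (app X) ≫ e.inv

/-- Multiplication (composition) in `End(D^perf(R))`. -/
def REnd.mul (α β : REnd R) : REnd R where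
  app X := α.app X ≫ β.app X
  natural {X Y} f := by
    try dsimp only
    rw [← Category.assoc, α.natural f, Category.assoc, β.natural f, ← Category.assoc]
  shift X Y e := by
    try dsimp only
    rw [α.shift X Y e, β.shift X Y e]
    simp only [Category.assoc, Iso.inv_hom_id_assoc, ← Functor.map_comp_assoc]

/-- The unit of `End(D^perf(R))`. -/
def REnd.one : REnd R where
  app X := 𝟙 X.obj
  natural {X Y} f := by (try dsimp only); rw [Category.comp_id, Category.id_comp]
  shift X Y e := by (try dsimp only); rw [CategoryTheory.Functor.map_id]; simp

/-- Addition in `End(D^perf(R))`. -/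
def REnd.add (α β : REnd R) : REnd R where
  app X := α.app X + β.app X
  natural {X Y} f := by
    try dsimp only
    rw [Preadditive.comp_add, Preadditive.add_comp, α.natural f, β.natural f]
  shift X Y e := by
    try dsimp only
    rw [Functor.map_add, α.shift X Y e, β.shift X Y e]
    simp [Preadditive.comp_add, Preadditive.add_comp]

/-- `α ∈ End(D^perf(R))` is pointwise nilpotent if each `α_X` is nilpotent. -/
def REnd.PNil (α : REnd R) : Prop :=
  ∀ X : Dperf R, ∃ n : ℕ, endPow (α.app X) (n + 1) = 0

section Complexes

open HomologicalComplex

variable {C : Type*} [Category C] [Preadditive C]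

lemma exists_quotient_map_eq_zero_and_f_eq_d_comp {X Y : CochainComplex C ℤ} (c : ℤ)
    (h : X.X (c + 1) ⟶ Y.X c) :
    ∃ ν : X ⟶ Y, (HomotopyCategory.quotient _ _).map ν = 0 ∧ (∀ i < c, ν.f i = 0) ∧
      ν.f c = X.d c (c + 1) ≫ h := by
  classical
  let ν : X ⟶ Y := Homotopy.nullHomotopicMap' fun i j _ =>
    if hij : i = c + 1 ∧ j = c then (X.XIsoOfEq hij.1).hom ≫ h ≫ (Y.XIsoOfEq hij.2).inv else 0
  refine ⟨ν, ?_, fun i hi => ?_, ?_⟩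
  · rw [HomotopyCategory.eq_of_homotopy ν 0 (Homotopy.nullHomotopy' _), Functor.map_zero]
  · rw [Homotopy.nullHomotopicMap'_f (show (ComplexShape.up ℤ).Rel (i - 1) i by simp)
      (show (ComplexShape.up ℤ).Rel i (i + 1) by simp), dif_neg (by omega), dif_neg (by omega)]
    simp
  · rw [Homotopy.nullHomotopicMap'_f (show (ComplexShape.up ℤ).Rel (c - 1) c by simp)
      (show (ComplexShape.up ℤ).Rel c (c + 1) by simp), dif_pos ⟨rfl, rfl⟩, dif_neg (by omega)]
    simp

variable [HasZeroObject C]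

lemma exists_f_eq_d_comp_of_quotient_map_eq_zero {X : CochainComplex C ℤ} {A : C} {c : ℤ}
    (φ : X ⟶ (single C (ComplexShape.up ℤ) c).obj A)
    (hφ : (HomotopyCategory.quotient _ _).map φ = 0) :
    ∃ h : X.X (c + 1) ⟶ ((single C (ComplexShape.up ℤ) c).obj A).X c,
      φ.f c = X.d c (c + 1) ≫ h := by
  have H := (HomotopyCategory.homotopyOfEq _ _ (hφ.trans (Functor.map_zero _ _ _).symm)).comm c
  rw [dNext_eq _ (show (ComplexShape.up ℤ).Rel c (c + 1) by simp),
    prevD_eq _ (show (ComplexShape.up ℤ).Rel (c - 1) c by simp)] at H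
  simp only [single_obj_d, comp_zero, add_zero, zero_f] at H
  exact ⟨_, H⟩

instance faithful_single_comp_quotient (c : ℤ) :
    (single C (ComplexShape.up ℤ) c ⋙
      HomotopyCategory.quotient C (ComplexShape.up ℤ)).Faithful where
  map_injective {A B} f g hfg := by
    rw [← sub_eq_zero]
    obtain ⟨h, hh⟩ := exists_f_eq_d_comp_of_quotient_map_eq_zero
      ((single C (ComplexShape.up ℤ) c).map (f - g))
      (by simpa only [Functor.comp_map, Functor.map_sub, sub_eq_zero] using hfg)
    rw [single_map_f_self, single_obj_d, zero_comp] at hh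
    simpa using (singleObjXSelf (ComplexShape.up ℤ) c A).inv ≫= hh =≫
      (singleObjXSelf (ComplexShape.up ℤ) c B).hom

lemma exists_homotopic_vanishing_below_succ {X Y Z : CochainComplex C ℤ} {c : ℤ} (u : Z ⟶ X)
    (w : X ⟶ Y) (hw : ∀ i < c, w.f i = 0) (θ : X ⟶ (single C (ComplexShape.up ℤ) c).obj (Y.X c))
    (hθ : θ.f c = w.f c ≫ (singleObjXSelf (ComplexShape.up ℤ) c (Y.X c)).inv)
    (hu : (HomotopyCategory.quotient _ _).map (u ≫ θ) = 0) :
    ∃ w' : Z ⟶ Y, (HomotopyCategory.quotient _ _).map w' =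
      (HomotopyCategory.quotient _ _).map (u ≫ w) ∧ ∀ i < c + 1, w'.f i = 0 := by
  obtain ⟨h, hh⟩ := exists_f_eq_d_comp_of_quotient_map_eq_zero _ hu
  obtain ⟨ν, hν, hν_lt, hν_c⟩ := exists_quotient_map_eq_zero_and_f_eq_d_comp c
    (h ≫ (singleObjXSelf (ComplexShape.up ℤ) c (Y.X c)).hom)
  refine ⟨u ≫ w - ν, by rw [Functor.map_sub, hν, sub_zero], fun i hi => ?_⟩
  rcases (Int.lt_add_one_iff.mp hi).lt_or_eq with hlt | rfl
  · simp [hw i hlt, hν_lt i hlt]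
  · rw [sub_f_apply, comp_f, hν_c, ← Category.assoc, ← hh, comp_f, hθ]
    simp

end Complexes

lemma isPerf_single (a : ℤ) (M : ModuleCat.{u} R) [Module.Finite R M] [Module.Projective R M] :
    IsPerf R ((HomotopyCategory.quotient _ _).obj
      ((HomologicalComplex.single _ (ComplexShape.up ℤ) a).obj M)) := by
  refine ⟨⟨a, a, fun i hi => HomologicalComplex.isZero_single_obj_X _ _ _ _ (by omega)⟩,
    fun i => ?_⟩
  rw [HomotopyCategory.quotient_obj_as]
  by_cases hi : i = a
  · subst hi
    have e := (HomologicalComplex.singleObjXSelf (ComplexShape.up ℤ) i M).toLinearEquiv.symm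
    exact ⟨Module.Finite.equiv e, Module.Projective.of_equiv e⟩
  · have := ModuleCat.subsingleton_of_isZero
      (HomologicalComplex.isZero_single_obj_X (ComplexShape.up ℤ) a M i hi)
    exact ⟨Module.Finite.of_finite, Module.Projective.of_free⟩

noncomputable def singlePerf (a : ℤ) (M : ModuleCat.{u} R) [Module.Finite R M]
    [Module.Projective R M] : Dperf R :=
  ⟨_, isPerf_single a M⟩

instance : Module.Finite R (ModuleCat.of R R) := inferInstanceAs (Module.Finite R R)

instance : Module.Projective R (ModuleCat.of R R) := inferInstanceAs (Module.Projective R R)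

lemma endPow_eq_pow {X : HtpyCat R} (f : X ⟶ X) (n : ℕ) : endPow f n = End.of f ^ n := by
  induction n with
  | zero => rfl
  | succ n ih => rw [pow_succ', End.mul_def, ← ih]; rfl

namespace REnd

variable (α : REnd R)

lemma app_eq_zero_of_iso {X Y : Dperf R} (e : X.obj ≅ Y.obj) (h : α.app X = 0) :
    α.app Y = 0 := by
  rw [← e.inv_hom_id_assoc (α.app Y), α.natural e.hom, h, zero_comp, comp_zero]

lemma app_eq_zero_iff_of_iso_shift {X Y : Dperf R}
    (e : Y.obj ≅ (shiftFunctor (HtpyCat R) (1 : ℤ)).obj X.obj) :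
    α.app Y = 0 ↔ α.app X = 0 := by
  rw [α.shift X Y e, Preadditive.IsIso.comp_left_eq_zero,
    Preadditive.IsIso.comp_right_eq_zero, Functor.map_eq_zero_iff]

lemma app_singlePerf_zero_eq_zero (h : α.app (singlePerf 0 (ModuleCat.of R R)) = 0)
    (M : ModuleCat.{u} R) [Module.Finite R M] [Module.Projective R M] :
    α.app (singlePerf 0 M) = 0 := by
  let F := HomologicalComplex.single (ModuleCat.{u} R) (ComplexShape.up ℤ) 0 ⋙
    HomotopyCategory.quotient _ _
  obtain ⟨g, hg⟩ := F.map_surjective (α.app (singlePerf 0 M))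
  suffices g = 0 by rw [← hg, this, F.map_zero]; rfl
  ext m
  have hm : F.map (ModuleCat.ofHom (LinearMap.toSpanSingleton R M m) ≫ g) = 0 := by
    rw [F.map_comp, hg]
    exact (α.natural (X := singlePerf 0 (ModuleCat.of R R)) (Y := singlePerf 0 M) _).trans
      (by rw [h]; exact zero_comp)
  rw [F.map_eq_zero_iff] at hm
  simpa using LinearMap.congr_fun (congrArg ModuleCat.Hom.hom hm) (1 : R)

lemma app_singlePerf_eq_zero (h : α.app (singlePerf 0 (ModuleCat.of R R)) = 0) (a : ℤ)
    (M : ModuleCat.{u} R) [Module.Finite R M] [Module.Projective R M] :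
    α.app (singlePerf a M) = 0 := by
  have step (b : ℤ) : α.app (singlePerf b M) = 0 ↔ α.app (singlePerf (b + 1) M) = 0 :=
    α.app_eq_zero_iff_of_iso_shift
      (((HomotopyCategory.singleFunctors _).shiftIso 1 b (b + 1) (by ring)).symm.app M)
  induction a using Int.induction_on with
  | zero => exact α.app_singlePerf_zero_eq_zero h M
  | succ i hi => exact (step i).mp hi
  | pred i hi => exact (step (-i - 1)).mpr (by rwa [sub_add_cancel])

lemma exists_pow_app_eq_map_vanishing_below (h : α.app (singlePerf 0 (ModuleCat.of R R)) = 0)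
    (X : Dperf R) {a : ℤ} (hX : ∀ i < a, IsZero (X.obj.as.X i)) (k : ℕ) :
    ∃ w : X.obj.as ⟶ X.obj.as, (HomotopyCategory.quotient _ _).map w = End.of (α.app X) ^ k ∧
      ∀ i < a + k, w.f i = 0 := by
  induction k with
  | zero =>
    exact ⟨𝟙 _, CategoryTheory.Functor.map_id _ _,
      fun i hi => (hX i (by simpa using hi)).eq_of_src _ _⟩
  | succ k ih =>
    obtain ⟨w, hwQ, hw⟩ := ih
    obtain ⟨u, hu⟩ := (HomotopyCategory.quotient _ _).map_surjective (α.app X)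
    obtain ⟨_, _⟩ := X.property.2 (a + k)
    let θ := HomologicalComplex.mkHomToSingle (w.f (a + k)) fun i hi => by
      rw [← w.comm, hw i (by simp at hi; omega), zero_comp]
    obtain ⟨w', hw'Q, hw'⟩ := exists_homotopic_vanishing_below_succ u w hw θ
      (HomologicalComplex.mkHomToSingle_f _ _) (by
        rw [Functor.map_comp, hu]
        exact (α.natural (Y := singlePerf (a + k) (X.obj.as.X (a + k))) _).symm.trans
          (by rw [α.app_singlePerf_eq_zero h]; exact comp_zero))
    refine ⟨w', ?_, by simpa [← add_assoc] using hw'⟩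
    rw [hw'Q, Functor.map_comp, hu, hwQ, pow_succ, End.mul_def]; rfl

lemma pnil_of_app_singlePerf_zero (h : α.app (singlePerf 0 (ModuleCat.of R R)) = 0) :
    α.PNil := by
  intro X
  obtain ⟨⟨a, b, hab⟩, -⟩ := X.property
  obtain ⟨w, hwQ, hw⟩ := α.exists_pow_app_eq_map_vanishing_below h X
    (fun i hi => hab i (.inl hi)) ((b - a).toNat + 1)
  have hw0 : w = 0 := by
    ext i : 1
    by_cases hi : i < a + ((b - a).toNat + 1 : ℕ)
    · exact hw i hi
    · exact (hab i (.inr (by omega))).eq_of_tgt _ _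
  refine ⟨(b - a).toNat, ?_⟩
  rw [endPow_eq_pow, ← hwQ, hw0, Functor.map_zero]; rfl

end REnd

/-- Proposition 8.1 (1) and (2): let `K = D^perf(R)` and let
`λ : R → End(K)` send `r` to multiplication by `r` everywhere, and
`σ : End(K) → R` send `α` to `α_𝟙 ∈ End_K(𝟙) ≅ R`, where `𝟙` is the complex `R`
concentrated in degree zero.  Then `σ` is a ring homomorphism with `σ ∘ λ = id_R`,
and every `α` with `σ(α) = 0` is pointwise nilpotent. -/
theorem stmt18
    (one : Dperf R)
    (eone : one.obj ≅ oneCplx R)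
    (ε : CategoryTheory.End one.obj ≃+* R)
    (hε : ∀ r : R, ε (r • 𝟙 one.obj) = r)
    (lam : R → REnd R) (hlam : ∀ (r : R) (X : Dperf R), (lam r).app X = r • 𝟙 X.obj)
    (sig : REnd R → R) (hsig : ∀ α : REnd R, sig α = ε (α.app one)) :
    (∀ α β : REnd R, sig (α.mul β) = sig α * sig β) ∧
    (∀ α β : REnd R, sig (α.add β) = sig α + sig β) ∧
    sig REnd.one = 1 ∧
    (∀ r : R, sig (lam r) = r) ∧
    (∀ α : REnd R, sig α = 0 → α.PNil) := by
  refine ⟨fun α β => ?_, fun α β => ?_, ?_, fun r => ?_, fun α hα => ?_⟩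
  · rw [hsig, hsig, hsig, mul_comm, ← map_mul]
    rfl
  · rw [hsig, hsig, hsig, ← map_add]
    rfl
  · rw [hsig, ← map_one ε]
    rfl
  · rw [hsig, hlam, hε]
  · have h_one : α.app one = 0 := ε.injective (by rw [← hsig, hα, map_zero])
    exact α.pnil_of_app_singlePerf_zero
      (α.app_eq_zero_of_iso (Y := singlePerf 0 (ModuleCat.of R R)) eone h_one)

end Balmer
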